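/- Let d be a positive integer, σ > 0, let Σ₀ and Σ_q be symmetric positive definite d×d real matrices, let G be a symmetric positive semi-definite d×d real matrix, and let Σ̄ be a symmetric positive semi-definite d×d matrix with λ₁(Σ̄) ≤ λ₁(Σ_q). Set M = Σ₀⁻¹ + G and Σ̂ = M⁻¹ + M⁻¹ Σ₀⁻¹ Σ̄ Σ₀⁻¹ M⁻¹. Define c_q = λ₁(Σ₀)² λ₁(Σ_q) / λ_d(Σ₀)², c₁ = λ₁(Σ₀) / log(1 + σ⁻² λ₁(Σ₀)), and c₂ = c_q / log(1 + σ⁻² c_q). Then for every a ∈ ℝ^d with ‖a‖₂ ≤ 1: aᵀ Σ̂ a ≤ c₁ log(1 + σ⁻² aᵀ M⁻¹ a) + c₂ log(1 + σ⁻² aᵀ M⁻¹ Σ₀⁻¹ Σ̄ Σ₀⁻¹ M⁻¹ a). -/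

import Mathlib

open Matrix Real

/-- Maximum eigenvalue λ₁ of a symmetric (Hermitian) real matrix. -/
noncomputable def maxEig {d : ℕ} (M : Matrix (Fin d) (Fin d) ℝ) : ℝ :=
  if h : M.IsHermitian then ⨆ i, h.eigenvalues i else 0

/-- Minimum eigenvalue λ_d of a symmetric (Hermitian) real matrix. -/
noncomputable def minEig {d : ℕ} (M : Matrix (Fin d) (Fin d) ℝ) : ℝ :=
  if h : M.IsHermitian then ⨅ i, h.eigenvalues i else 0

/-- The positive semidefinite square root of a positive semidefinite matrix
(junk value `1` otherwise). -/
noncomputable def matSqrt {d : ℕ} (M : Matrix (Fin d) (Fin d) ℝ) : Matrix (Fin d) (Fin d) ℝ :=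
  @dite _ M.PosSemidef (Classical.propDecidable _) (fun h => (h.1.eigenvectorUnitary : Matrix (Fin d) (Fin d) ℝ) *
    diagonal ((↑) ∘ (√·) ∘ h.1.eigenvalues) * (star h.1.eigenvectorUnitary : Matrix (Fin d) (Fin d) ℝ)) (fun _ => 1)

lemma log_surrogate {s B x : ℝ} (hs : 0 < s) (hB : 0 < B) (hx0 : 0 ≤ x) (hxB : x ≤ B) :
    x ≤ B / Real.log (1 + s * B) * Real.log (1 + s * x) := by
  have hL : 0 < Real.log (1 + s * B) := Real.log_pos (by nlinarith)
  rcases eq_or_lt_of_le hx0 with h0 | hx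
  · simp [← h0]
  · rw [div_mul_eq_mul_div, le_div_iff₀ hL]
    have key : (x / B) * Real.log (1 + s * B) ≤ Real.log (1 + s * x) := by
      have hconc := strictConcaveOn_log_Ioi.concaveOn.2 (Set.mem_Ioi.2 one_pos)
        (Set.mem_Ioi.2 (show (0:ℝ) < 1 + s * B by nlinarith))
        (show 0 ≤ 1 - x / B by rw [sub_nonneg]; exact div_le_one_of_le₀ hxB hB.le)
        (show 0 ≤ x / B from div_nonneg hx0 hB.le) (by ring)
      have : (1 - x / B) • (1:ℝ) + (x / B) • (1 + s * B) = 1 + s * x := by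
        simp only [smul_eq_mul]
        have hxB' : x / B * B = x := div_mul_cancel₀ x hB.ne'
        linear_combination s * hxB'
      rw [this] at hconc
      simpa [Real.log_one] using hconc
    calc x * Real.log (1 + s * B) = (x / B * Real.log (1 + s * B)) * B := by field_simp
      _ ≤ Real.log (1 + s * x) * B := mul_le_mul_of_nonneg_right key hB.le
      _ = B * Real.log (1 + s * x) := mul_comm _ _

lemma dot_shift {d : ℕ} (B : Matrix (Fin d) (Fin d) ℝ) (u v : Fin d → ℝ) :
    u ⬝ᵥ (B *ᵥ v) = (Bᵀ *ᵥ u) ⬝ᵥ v := by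
  rw [Matrix.dotProduct_mulVec, Matrix.mulVec_transpose]

lemma herm_transpose_eq {d : ℕ} {A : Matrix (Fin d) (Fin d) ℝ} (hA : A.IsHermitian) :
    Aᵀ = A := by
  rw [← Matrix.conjTranspose_eq_transpose_of_trivial]; exact hA

lemma dot_shift' {d : ℕ} {A : Matrix (Fin d) (Fin d) ℝ} (hA : A.IsHermitian)
    (u v : Fin d → ℝ) : u ⬝ᵥ (A *ᵥ v) = (A *ᵥ u) ⬝ᵥ v := by
  rw [dot_shift, herm_transpose_eq hA]

lemma spectral_coords {d : ℕ} {A : Matrix (Fin d) (Fin d) ℝ} (hA : A.IsHermitian)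
    (x : Fin d → ℝ) :
    ∃ c : Fin d → ℝ,
      x ⬝ᵥ x = ∑ i, c i ^ 2 ∧
      x ⬝ᵥ (A *ᵥ x) = ∑ i, hA.eigenvalues i * c i ^ 2 ∧
      (A *ᵥ x) ⬝ᵥ (A *ᵥ x) = ∑ i, hA.eigenvalues i ^ 2 * c i ^ 2 := by
  set U : Matrix (Fin d) (Fin d) ℝ := (IsHermitian.eigenvectorUnitary hA : Matrix (Fin d) (Fin d) ℝ) with hU
  have hst : star U = Uᵀ := rfl
  have hUU : U * Uᵀ = 1 := by
    rw [← hst]; exact (Matrix.mem_unitaryGroup_iff).mp (IsHermitian.eigenvectorUnitary hA).2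
  have hUU' : Uᵀ * U = 1 := by
    rw [← hst]; exact (Matrix.mem_unitaryGroup_iff').mp (IsHermitian.eigenvectorUnitary hA).2
  set D : Matrix (Fin d) (Fin d) ℝ := Matrix.diagonal hA.eigenvalues with hD
  have hspec : A = U * D * Uᵀ := by
    have := hA.spectral_theorem
    rw [← hst]
    rw [Unitary.conjStarAlgAut_apply] at this
    exact this
  have hAx : A *ᵥ x = U *ᵥ (D *ᵥ (Uᵀ *ᵥ x)) := by
    conv_lhs => rw [hspec]
    rw [Matrix.mulVec_mulVec, Matrix.mulVec_mulVec, Matrix.mul_assoc]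
  refine ⟨Uᵀ *ᵥ x, ?_, ?_, ?_⟩
  · have : x ⬝ᵥ x = (Uᵀ *ᵥ x) ⬝ᵥ (Uᵀ *ᵥ x) := by
      rw [← dot_shift, Matrix.mulVec_mulVec, hUU, Matrix.one_mulVec]
    rw [this, dotProduct]
    exact Finset.sum_congr rfl fun i _ => (sq _).symm
  · rw [hAx, dot_shift, dotProduct]
    exact Finset.sum_congr rfl fun i _ => by
      rw [Matrix.mulVec_diagonal]; ring
  · rw [hAx, dot_shift, Matrix.mulVec_mulVec, hUU', Matrix.one_mulVec, dotProduct]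
    exact Finset.sum_congr rfl fun i _ => by
      rw [Matrix.mulVec_diagonal]; ring

lemma eig_le_maxEig {d : ℕ} {A : Matrix (Fin d) (Fin d) ℝ} (hA : A.IsHermitian) (i : Fin d) :
    hA.eigenvalues i ≤ maxEig A := by
  rw [maxEig, dif_pos hA]
  exact le_ciSup (Set.finite_range _).bddAbove i

lemma minEig_le_eig {d : ℕ} {A : Matrix (Fin d) (Fin d) ℝ} (hA : A.IsHermitian) (i : Fin d) :
    minEig A ≤ hA.eigenvalues i := by
  rw [minEig, dif_pos hA]
  exact ciInf_le (Set.finite_range _).bddBelow i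

lemma maxEig_pos {d : ℕ} (hd : 0 < d) {A : Matrix (Fin d) (Fin d) ℝ} (hA : A.PosDef) :
    0 < maxEig A :=
  lt_of_lt_of_le (hA.eigenvalues_pos ⟨0, hd⟩) (eig_le_maxEig hA.isHermitian _)

lemma minEig_pos {d : ℕ} (hd : 0 < d) {A : Matrix (Fin d) (Fin d) ℝ} (hA : A.PosDef) :
    0 < minEig A := by
  haveI : Nonempty (Fin d) := Fin.pos_iff_nonempty.mp hd
  obtain ⟨i, hi⟩ := exists_eq_ciInf_of_finite (f := hA.isHermitian.eigenvalues)
  rw [minEig, dif_pos hA.isHermitian, ← hi]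
  exact hA.eigenvalues_pos i

lemma quad_le_max {d : ℕ} {A : Matrix (Fin d) (Fin d) ℝ} (hA : A.IsHermitian)
    (x : Fin d → ℝ) : x ⬝ᵥ (A *ᵥ x) ≤ maxEig A * (x ⬝ᵥ x) := by
  obtain ⟨c, h1, h2, _⟩ := spectral_coords hA x
  rw [h1, h2, Finset.mul_sum]
  exact Finset.sum_le_sum fun i _ =>
    mul_le_mul_of_nonneg_right (eig_le_maxEig hA i) (sq_nonneg _)

lemma sqnorm_mulVec_le {d : ℕ} {A : Matrix (Fin d) (Fin d) ℝ} (hA : A.PosSemidef)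
    (x : Fin d → ℝ) : (A *ᵥ x) ⬝ᵥ (A *ᵥ x) ≤ maxEig A * (x ⬝ᵥ (A *ᵥ x)) := by
  obtain ⟨c, _, h2, h3⟩ := spectral_coords hA.isHermitian x
  rw [h2, h3, Finset.mul_sum]
  refine Finset.sum_le_sum fun i _ => ?_
  have h0 := hA.eigenvalues_nonneg i
  have hm := eig_le_maxEig hA.isHermitian i
  nlinarith [sq_nonneg (c i), mul_nonneg (sub_nonneg.2 hm) (mul_nonneg h0 (sq_nonneg (c i)))]

lemma sqnorm_mulVec_ge {d : ℕ} (hd : 0 < d) {A : Matrix (Fin d) (Fin d) ℝ}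
    (hA : A.PosSemidef) (x : Fin d → ℝ) :
    minEig A ^ 2 * (x ⬝ᵥ x) ≤ (A *ᵥ x) ⬝ᵥ (A *ᵥ x) := by
  haveI : Nonempty (Fin d) := Fin.pos_iff_nonempty.mp hd
  have hmin0 : 0 ≤ minEig A := by
    obtain ⟨i, hi⟩ := exists_eq_ciInf_of_finite (f := hA.isHermitian.eigenvalues)
    rw [minEig, dif_pos hA.isHermitian, ← hi]
    exact hA.eigenvalues_nonneg i
  obtain ⟨c, h1, _, h3⟩ := spectral_coords hA.isHermitian x
  rw [h1, h3, Finset.mul_sum]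
  refine Finset.sum_le_sum fun i _ => ?_
  have hm := minEig_le_eig hA.isHermitian i
  exact mul_le_mul_of_nonneg_right (pow_le_pow_left₀ hmin0 hm 2) (sq_nonneg _)

lemma psd_quad_nonneg {d : ℕ} {A : Matrix (Fin d) (Fin d) ℝ} (hA : A.PosSemidef)
    (x : Fin d → ℝ) : 0 ≤ x ⬝ᵥ (A *ᵥ x) := by
  have := hA.dotProduct_mulVec_nonneg x
  simpa using this

/-- Per-round posterior variance decomposition bound (equation (10), proof of Theorem 1):
with M = Σ₀⁻¹ + G and Σ̂ = M⁻¹ + M⁻¹ Σ₀⁻¹ Σ̄ Σ₀⁻¹ M⁻¹, λ₁(Σ̄) ≤ λ₁(Σ_q), and the constants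
c_q = λ₁(Σ₀)² λ₁(Σ_q)/λ_d(Σ₀)², c₁ = λ₁(Σ₀)/log(1 + σ⁻²λ₁(Σ₀)), c₂ = c_q/log(1 + σ⁻²c_q),
for every unit-norm-bounded a:
aᵀ Σ̂ a ≤ c₁ log(1 + σ⁻² aᵀ M⁻¹ a) + c₂ log(1 + σ⁻² aᵀ M⁻¹ Σ₀⁻¹ Σ̄ Σ₀⁻¹ M⁻¹ a).
(Here S0 = Σ₀, Sq = Σ_q, Sbar = Σ̄, Shat = Σ̂.) -/
theorem per_round_variance_decomposition {d : ℕ} (hd : 0 < d)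
    (σ : ℝ) (hσ : 0 < σ)
    (S0 Sq G Sbar : Matrix (Fin d) (Fin d) ℝ)
    (hS0 : S0.PosDef) (hSq : Sq.PosDef) (hG : G.PosSemidef) (hSbar : Sbar.PosSemidef)
    (hle : maxEig Sbar ≤ maxEig Sq)
    (M : Matrix (Fin d) (Fin d) ℝ) (hM : M = S0⁻¹ + G)
    (Shat : Matrix (Fin d) (Fin d) ℝ)
    (hShat : Shat = M⁻¹ + M⁻¹ * S0⁻¹ * Sbar * S0⁻¹ * M⁻¹)
    (cq c₁ c₂ : ℝ)
    (hcq : cq = maxEig S0 ^ 2 * maxEig Sq / minEig S0 ^ 2)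
    (hc₁ : c₁ = maxEig S0 / Real.log (1 + (σ ^ 2)⁻¹ * maxEig S0))
    (hc₂ : c₂ = cq / Real.log (1 + (σ ^ 2)⁻¹ * cq))
    (a : Fin d → ℝ) (ha : ∑ i, a i ^ 2 ≤ 1) :
    a ⬝ᵥ (Shat *ᵥ a)
      ≤ c₁ * Real.log (1 + (σ ^ 2)⁻¹ * (a ⬝ᵥ (M⁻¹ *ᵥ a)))
        + c₂ * Real.log (1 + (σ ^ 2)⁻¹ * (a ⬝ᵥ ((M⁻¹ * S0⁻¹ * Sbar * S0⁻¹ * M⁻¹) *ᵥ a))) := by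
  have hs : (0:ℝ) < (σ ^ 2)⁻¹ := by positivity
  have hS0inv : S0⁻¹.PosDef := hS0.inv
  have hMpd : M.PosDef := hM ▸ hS0inv.add_posSemidef hG
  have hMinv : M⁻¹.PosDef := hMpd.inv
  have hdetS0 : IsUnit S0.det := isUnit_iff_ne_zero.2 (ne_of_gt hS0.det_pos)
  have hdetM : IsUnit M.det := isUnit_iff_ne_zero.2 (ne_of_gt hMpd.det_pos)
  have hmaxS0 : 0 < maxEig S0 := maxEig_pos hd hS0
  have hminS0 : 0 < minEig S0 := minEig_pos hd hS0
  have hmaxSq : 0 < maxEig Sq := maxEig_pos hd hSq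
  -- key inequality for S0⁻¹ : ‖y‖² ≤ λ₁(S0) · yᵀS0⁻¹y
  have key : ∀ y : Fin d → ℝ, y ⬝ᵥ y ≤ maxEig S0 * (y ⬝ᵥ (S0⁻¹ *ᵥ y)) := by
    intro y
    set z := S0⁻¹ *ᵥ y with hz
    have hyz : S0 *ᵥ z = y := by
      rw [hz, Matrix.mulVec_mulVec, Matrix.mul_nonsing_inv _ hdetS0, Matrix.one_mulVec]
    have h7 := sqnorm_mulVec_le hS0.posSemidef z
    rw [hyz] at h7
    have hyy : y ⬝ᵥ (S0⁻¹ *ᵥ y) = z ⬝ᵥ y := by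
      rw [← hz, dotProduct_comm]
    rw [hyy]
    exact h7
  -- the two quadratic terms
  set w : Fin d → ℝ := M⁻¹ *ᵥ a with hw
  set p : ℝ := a ⬝ᵥ (M⁻¹ *ᵥ a) with hp
  have hMw : M *ᵥ w = a := by
    rw [hw, Matrix.mulVec_mulVec, Matrix.mul_nonsing_inv _ hdetM, Matrix.one_mulVec]
  have hp0 : 0 ≤ p := psd_quad_nonneg hMinv.posSemidef a
  have hww0 : 0 ≤ w ⬝ᵥ w := Finset.sum_nonneg fun i _ => mul_self_nonneg _
  have hwMw : w ⬝ᵥ (M *ᵥ w) = p := by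
    rw [hMw, dotProduct_comm, hp, hw]
  have hMsplit : w ⬝ᵥ (S0⁻¹ *ᵥ w) ≤ p := by
    have : w ⬝ᵥ (M *ᵥ w) = w ⬝ᵥ (S0⁻¹ *ᵥ w) + w ⬝ᵥ (G *ᵥ w) := by
      rw [hM, Matrix.add_mulVec, dotProduct_add]
    have hGw := psd_quad_nonneg hG w
    linarith [hwMw ▸ this.symm.le, hwMw ▸ this.ge]
  have hpw : w ⬝ᵥ w ≤ maxEig S0 * p :=
    (key w).trans (mul_le_mul_of_nonneg_left hMsplit hmaxS0.le)
  have hCS : p ^ 2 ≤ w ⬝ᵥ w := by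
    have h1 : p ^ 2 ≤ (∑ i, a i ^ 2) * (∑ i, w i ^ 2) := by
      have := Finset.sum_mul_sq_le_sq_mul_sq Finset.univ a w
      simpa [hp, hw, dotProduct] using this
    have h2 : (∑ i, w i ^ 2) = w ⬝ᵥ w := by
      rw [dotProduct]; exact Finset.sum_congr rfl fun i _ => (sq _)
    nlinarith [hww0]
  have hpB : p ≤ maxEig S0 := by nlinarith
  have hwwB : w ⬝ᵥ w ≤ maxEig S0 ^ 2 := by nlinarith
  -- second term
  set b : Fin d → ℝ := S0⁻¹ *ᵥ w with hb
  set q : ℝ := a ⬝ᵥ ((M⁻¹ * S0⁻¹ * Sbar * S0⁻¹ * M⁻¹) *ᵥ a) with hq'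
  have hq : q = b ⬝ᵥ (Sbar *ᵥ b) := by
    rw [hq', hb, hw]
    simp only [← Matrix.mulVec_mulVec]
    rw [dot_shift' hMinv.isHermitian, dot_shift' hS0inv.isHermitian]
  have hq0 : 0 ≤ q := hq ▸ psd_quad_nonneg hSbar b
  have hwb : S0 *ᵥ b = w := by
    rw [hb, Matrix.mulVec_mulVec, Matrix.mul_nonsing_inv _ hdetS0, Matrix.one_mulVec]
  have hbb : minEig S0 ^ 2 * (b ⬝ᵥ b) ≤ w ⬝ᵥ w := by
    have := sqnorm_mulVec_ge hd hS0.posSemidef b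
    rwa [hwb] at this
  have hbb0 : 0 ≤ b ⬝ᵥ b := Finset.sum_nonneg fun i _ => mul_self_nonneg _
  have hqB : q ≤ cq := by
    have h1 : q ≤ maxEig Sq * (b ⬝ᵥ b) := by
      rw [hq]
      exact (quad_le_max hSbar.isHermitian b).trans
        (mul_le_mul_of_nonneg_right hle hbb0)
    have h2 : maxEig Sq * (b ⬝ᵥ b) ≤ cq := by
      rw [hcq, le_div_iff₀ (by positivity : (0:ℝ) < minEig S0 ^ 2)]
      nlinarith
    linarith
  have hcq0 : 0 < cq := by
    rw [hcq]; positivity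
  -- decompose and conclude
  have hsplit : a ⬝ᵥ (Shat *ᵥ a) = p + q := by
    rw [hShat, Matrix.add_mulVec, dotProduct_add, hp, hq']
  rw [hsplit, hc₁, hc₂]
  exact add_le_add (log_surrogate hs hmaxS0 hp0 hpB) (log_surrogate hs hcq0 hq0 hqB)
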